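/- arXiv:1501.02631 — 3 statements merged into one kernel-verified Lean document; each statement's English description precedes it below -/
import Mathlib

section
/- Let D be an integral domain and ζ ∈ D a unit. Suppose given finitely many elements α_i, β_i ∈ D and integers e_{ij} (for i < j) satisfying: α_i·β_i = 0 for all i, and ζ^{e_{ij}}·α_i·β_j + ζ^{−e_{ij}}·α_j·β_i = 0 for all i < j. Then either all α_i = 0 or all β_i = 0. -/
/-- The algebraic core of the lemma on weights of products: in an integral domain `D` with a
unit `ζ`, if `α i * β i = 0` for all `i` and
`ζ^(e i j) * α i * β j + ζ^(-(e i j)) * α j * β i = 0` for all `i < j`, then all `α i = 0`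
or all `β i = 0`. -/
theorem all_zero_of_skew_relations (D : Type*) [CommRing D] [IsDomain D] (ζ : Dˣ)
    (n : ℕ) (α β : Fin n → D) (e : Fin n → Fin n → ℤ)
    (hdiag : ∀ i, α i * β i = 0)
    (hoff : ∀ i j, i < j →
      ((ζ ^ (e i j) : Dˣ) : D) * α i * β j + ((ζ ^ (-(e i j)) : Dˣ) : D) * α j * β i = 0) :
    (∀ i, α i = 0) ∨ (∀ i, β i = 0) := by
  by_contra h
  push_neg at h
  obtain ⟨⟨i, hi⟩, ⟨j, hj⟩⟩ := h
  have haj : α j = 0 := by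
    rcases mul_eq_zero.mp (hdiag j) with h | h
    · exact h
    · exact absurd h hj
  have hprod : α i * β j ≠ 0 := mul_ne_zero hi hj
  rcases lt_trichotomy i j with hij | hij | hij
  · have := hoff i j hij
    rw [haj] at this
    have : ((ζ ^ (e i j) : Dˣ) : D) * (α i * β j) = 0 := by linear_combination this
    rcases mul_eq_zero.mp this with h | h
    · exact Units.ne_zero _ h
    · exact hprod h
  · exact hi (hij ▸ haj)
  · have := hoff j i hij
    rw [haj] at this
    have : ((ζ ^ (-(e j i)) : Dˣ) : D) * (α i * β j) = 0 := by linear_combination this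
    rcases mul_eq_zero.mp this with h | h
    · exact Units.ne_zero _ h
    · exact hprod h
end

section
/- Let R be a commutative ring, x an indeterminate, and let A = R[x]/(q(x)) where q(x) = T_N(x) − c for some c ∈ R and N odd (T_N the normalized Chebyshev polynomial). Then A is a free R-module of rank N with basis 1, x, …, x^{N−1}, and for the R-linear map L_{T_k(x)} : A → A given by multiplication by T_k(x) with 0 ≤ k < N, the trace of L_{T_k(x)} is 0 unless k = 0, in which case it is 2N. -/
/-!
Work in the basis `1, T₁(x), …, T_{N-1}(x)` of `A`, which is unitriangular with respect to
`1, x, …, x^{N-1}` because each `T_j` is monic of degree `j`. The product formula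
`T_k T_j = T_{k+j} + T_{|k-j|}` together with `T_{N+r}(x) = c T_r(x) - T_{N-r}(x)` shows that for
`0 < k < N` the `j`-th diagonal entry of multiplication by `T_k(x)` is
`[k = 2j] - [k + 2j = 2N]`; the reflection `j ↦ N - j` exchanges the two kinds of nonzero
entries, so the trace vanishes. For `k = 0`, `T_0 = 2` acts as the scalar `2`.
-/

open Polynomial

/-- The normalized Chebyshev polynomials of the first kind:
`T 0 = 2`, `T 1 = X`, `T (n+2) = X * T (n+1) - T n`. -/
noncomputable def Tc (R : Type*) [CommRing R] : ℕ → Polynomial R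
  | 0 => 2
  | 1 => Polynomial.X
  | n + 2 => Polynomial.X * Tc R (n + 1) - Tc R n

theorem AdjoinRoot.exists_basis_mk_of_monic {R : Type*} [CommRing R] [Nontrivial R] {q : R[X]}
    (hq : q.Monic) {n : ℕ} (hn : q.natDegree = n) (p : Fin n → R[X]) (hp : ∀ i, (p i).Monic)
    (hdeg : ∀ i, (p i).natDegree = i) :
    ∃ b : Module.Basis (Fin n) R (AdjoinRoot q), ∀ i, b i = AdjoinRoot.mk q (p i) := by
  subst hn
  set e := AdjoinRoot.powerBasisAux' hq
  have hrepr (i j) : e.repr (AdjoinRoot.mk q (p j)) i = (p j).coeff i := by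
    rw [AdjoinRoot.powerBasisAux'_repr_apply_to_fun, AdjoinRoot.modByMonicHom_mk,
      (modByMonic_eq_self_iff hq).2 (degree_lt_degree (hdeg j ▸ j.isLt))]
  have hdet : IsUnit (e.det fun j => AdjoinRoot.mk q (p j)) := by
    rw [e.det_apply, Matrix.det_of_isUpperTriangular]
    · simp [Module.Basis.toMatrix_apply, hrepr, ← hdeg, (hp _).coeff_natDegree]
    · intro i j hij
      rw [Module.Basis.toMatrix_apply, hrepr]
      exact coeff_eq_zero_of_natDegree_lt (hdeg j ▸ hij)
  obtain ⟨hli, hspan⟩ := e.is_basis_iff_det.2 hdet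
  exact ⟨.mk hli hspan.ge, Module.Basis.mk_apply hli hspan.ge⟩

theorem sum_ite_two_mul_sub_ite_reflect_eq_zero {R : Type*} [AddCommGroupWithOne R] {N k : ℕ}
    (hk0 : 0 < k) (hk : k < 2 * N) :
    ∑ j : Fin N, ((if k = 2 * (j : ℕ) then (1 : R) else 0) -
      if k + 2 * (j : ℕ) = 2 * N then 1 else 0) = 0 := by
  rw [Finset.sum_sub_distrib, sub_eq_zero,
    Fin.sum_univ_eq_sum_range (fun j => if k = 2 * j then (1 : R) else 0),
    Fin.sum_univ_eq_sum_range (fun j => if k + 2 * j = 2 * N then (1 : R) else 0),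
    Finset.sum_boole, Finset.sum_boole]
  congr 1
  refine Finset.card_nbij' (N - ·) (N - ·) ?_ ?_ ?_ ?_ <;> intro j <;> simp <;> omega

namespace Tc

variable {R : Type*} [CommRing R]

theorem eq_chebyshev_C (n : ℕ) : Tc R n = Chebyshev.C R n := by
  induction n using Nat.twoStepInduction with
  | zero => simp [Tc]
  | one => simp [Tc]
  | more n ih₀ ih₁ =>
    rw [Tc, ih₀, ih₁]
    push_cast
    exact (Chebyshev.C_add_two R n).symm

theorem mul_Tc (m n : ℕ) : Tc R m * Tc R n = Tc R (m + n) + Tc R ((m : ℤ) - n).natAbs := by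
  simp only [eq_chebyshev_C, Chebyshev.C_natAbs, Chebyshev.C_mul_C]
  push_cast
  rfl

theorem natDegree_le (n : ℕ) : (Tc R n).natDegree ≤ n := by
  induction n using Nat.twoStepInduction with
  | zero => simp [Tc]
  | one => exact natDegree_X_le
  | more n ih₀ ih₁ =>
    show (X * Tc R (n + 1) - Tc R n).natDegree ≤ n + 2
    have hXT : (X * Tc R (n + 1)).natDegree ≤ n + 2 :=
      (natDegree_mul_le_of_le natDegree_X_le ih₁).trans (by omega)
    exact (natDegree_sub_le_of_le hXT (by omega)).trans (max_self _).le

theorem monic_and_natDegree [Nontrivial R] {n : ℕ} (hn : n ≠ 0) :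
    (Tc R n).Monic ∧ (Tc R n).natDegree = n := by
  induction n using Nat.twoStepInduction with
  | zero => exact absurd rfl hn
  | one => exact ⟨monic_X, natDegree_X⟩
  | more n _ ih₁ =>
    obtain ⟨hmonic, hdeg⟩ := ih₁ n.succ_ne_zero
    have hXT : (X * Tc R (n + 1)).natDegree = n + 2 := by
      rw [natDegree_X_mul hmonic.ne_zero, hdeg]
    have hlt : (Tc R n).natDegree < (X * Tc R (n + 1)).natDegree :=
      hXT ▸ (natDegree_le n).trans_lt (by omega)
    rw [Tc, natDegree_sub_eq_left_of_natDegree_lt hlt, hXT]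
    exact ⟨(monic_X.mul hmonic).sub_of_left (degree_lt_degree hlt), rfl⟩

theorem sub_C_monic_and_natDegree [Nontrivial R] {N : ℕ} (hN : N ≠ 0) (c : R) :
    (Tc R N - C c).Monic ∧ (Tc R N - C c).natDegree = N := by
  obtain ⟨hmonic, hdeg⟩ := monic_and_natDegree (R := R) hN
  refine ⟨hmonic.sub_of_left (degree_C_le.trans_lt ?_), natDegree_sub_C.trans hdeg⟩
  rw [degree_eq_natDegree hmonic.ne_zero, hdeg]
  exact_mod_cast Nat.pos_of_ne_zero hN

section TraceOfChebyshev

variable {R A : Type*} [CommRing R] [CommRing A] [Algebra R A] {N : ℕ} {x : A} {c : R}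

theorem aeval_add_of_le (hx : aeval x (Tc R N) = algebraMap R A c) {r : ℕ} (hr : r ≤ N) :
    aeval x (Tc R (N + r)) = c • aeval x (Tc R r) - aeval x (Tc R (N - r)) := by
  have h := congrArg (aeval x) (mul_Tc (R := R) N r)
  rw [show ((N : ℤ) - r).natAbs = N - r by omega, map_mul, map_add, hx, ← Algebra.smul_def] at h
  exact eq_sub_of_add_eq h.symm

theorem aeval_zero : aeval x (Tc R 0) = algebraMap R A 2 := by
  rw [Tc, map_ofNat, map_ofNat]

variable {b : Module.Basis (Fin N) R A}
  (hb : ∀ j : Fin N, b j = aeval x (if (j : ℕ) = 0 then 1 else Tc R j))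
include hb

theorem aeval_eq_basis {m : ℕ} (hm0 : m ≠ 0) (hmN : m < N) :
    aeval x (Tc R m) = b ⟨m, hmN⟩ := by
  simp [hb, hm0]

theorem repr_algebraMap_of_ne_zero (r : R) {j : Fin N} (hj : (j : ℕ) ≠ 0) :
    b.repr (algebraMap R A r) j = 0 := by
  have hb0 : b ⟨0, j.pos⟩ = 1 := by simp [hb]
  rw [Algebra.algebraMap_eq_smul_one, ← hb0, map_smul, b.repr_self, Finsupp.smul_apply,
    Finsupp.single_eq_of_ne (by simpa [Fin.ext_iff] using hj), smul_zero]

theorem repr_aeval_of_le (hx : aeval x (Tc R N) = algebraMap R A c) {m : ℕ} (hm : m ≤ N)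
    {j : Fin N} (hj : (j : ℕ) ≠ 0) :
    b.repr (aeval x (Tc R m)) j = if m = j then 1 else 0 := by
  rcases Nat.eq_zero_or_pos m with rfl | hm0
  · rw [aeval_zero, repr_algebraMap_of_ne_zero hb 2 hj, if_neg (Ne.symm hj)]
  rcases hm.lt_or_eq with hmN | rfl
  · rw [aeval_eq_basis hb hm0.ne' hmN, b.repr_self, Finsupp.single_apply]
    simp [Fin.ext_iff, eq_comm]
  · rw [hx, repr_algebraMap_of_ne_zero hb c hj, if_neg j.isLt.ne']

theorem repr_aeval_add_of_le (hx : aeval x (Tc R N) = algebraMap R A c) {r : ℕ} (hr : r ≤ N)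
    {j : Fin N} (hj : (j : ℕ) ≠ 0) :
    b.repr (aeval x (Tc R (N + r))) j =
      c * (if r = j then 1 else 0) - if N - r = j then 1 else 0 := by
  rw [aeval_add_of_le hx hr, map_sub, map_smul, Finsupp.sub_apply, Finsupp.smul_apply,
    repr_aeval_of_le hb hx hr hj, repr_aeval_of_le hb hx (N.sub_le r) hj, smul_eq_mul]

theorem repr_aeval_mul_basis_self (hx : aeval x (Tc R N) = algebraMap R A c) {k : ℕ}
    (hk0 : 0 < k) (hkN : k < N) (j : Fin N) :
    b.repr (aeval x (Tc R k) * b j) j =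
      (if k = 2 * (j : ℕ) then 1 else 0) - if k + 2 * (j : ℕ) = 2 * N then 1 else 0 := by
  by_cases hj : (j : ℕ) = 0
  · rw [hb j, if_pos hj, map_one, mul_one, aeval_eq_basis hb hk0.ne' hkN, b.repr_self,
      Finsupp.single_eq_of_ne (by simp [Fin.ext_iff]; omega), if_neg (by omega), if_neg (by omega),
      sub_zero]
  rw [hb j, if_neg hj, ← map_mul, mul_Tc, map_add, map_add, Finsupp.add_apply,
    repr_aeval_of_le hb hx (m := ((k : ℤ) - j).natAbs) (by omega) hj]
  rcases le_or_gt (k + j) N with hle | hlt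
  · rw [repr_aeval_of_le hb hx hle hj]
    split_ifs <;> first | omega | simp
  · obtain ⟨r, hr⟩ : ∃ r, k + j = N + r := ⟨k + j - N, by omega⟩
    rw [hr, repr_aeval_add_of_le hb hx (by omega) hj]
    split_ifs <;> first | omega | simp

theorem trace_mulLeft_aeval (hx : aeval x (Tc R N) = algebraMap R A c) {k : ℕ} (hk : k < N) :
    LinearMap.trace R A (LinearMap.mulLeft R (aeval x (Tc R k))) =
      if k = 0 then (2 * N : R) else 0 := by
  rw [LinearMap.trace_eq_matrix_trace R b, Matrix.trace]
  simp only [Matrix.diag_apply, LinearMap.toMatrix_apply, LinearMap.mulLeft_apply]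
  rcases Nat.eq_zero_or_pos k with rfl | hk0
  · have htwo (j : Fin N) : aeval x (Tc R 0) * b j = (2 : R) • b j := by
      rw [aeval_zero, Algebra.smul_def]
    simp [htwo, mul_comm]
  · simp only [repr_aeval_mul_basis_self hb hx hk0 hk, if_neg hk0.ne']
    exact sum_ite_two_mul_sub_ite_reflect_eq_zero hk0 (by omega)

end TraceOfChebyshev

end Tc

theorem annulus_trace_general (R : Type*) [CommRing R]
    (N : ℕ) (hN : 3 ≤ N) (c : R) :
    (∃ b : Module.Basis (Fin N) R (AdjoinRoot (Tc R N - Polynomial.C c)),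
      ∀ i : Fin N, b i = AdjoinRoot.root (Tc R N - Polynomial.C c) ^ (i : ℕ)) ∧
    (∀ k : ℕ, k < N →
      LinearMap.trace R (AdjoinRoot (Tc R N - Polynomial.C c))
          (LinearMap.mulLeft R (AdjoinRoot.mk (Tc R N - Polynomial.C c) (Tc R k))) =
        if k = 0 then (2 * N : R) else 0) := by
  rcases subsingleton_or_nontrivial R with hR | hR
  · have : Subsingleton (AdjoinRoot (Tc R N - C c)) := Module.subsingleton R _
    exact ⟨⟨default, fun _ => Subsingleton.elim _ _⟩, fun _ _ => Subsingleton.elim _ _⟩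
  obtain ⟨hq, hqN⟩ := Tc.sub_C_monic_and_natDegree (R := R) (by omega : N ≠ 0) c
  refine ⟨?_, fun k hk => ?_⟩
  · obtain ⟨b, hb⟩ := AdjoinRoot.exists_basis_mk_of_monic hq hqN (fun i => X ^ (i : ℕ))
      (fun _ => monic_X_pow _) (fun _ => natDegree_X_pow _)
    exact ⟨b, fun i => by rw [hb, map_pow, AdjoinRoot.mk_X]⟩
  have hp (i : Fin N) : (if (i : ℕ) = 0 then 1 else Tc R i).Monic ∧
      (if (i : ℕ) = 0 then 1 else Tc R i).natDegree = i := by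
    split_ifs with hi
    · exact ⟨monic_one, hi ▸ natDegree_one⟩
    · exact Tc.monic_and_natDegree hi
  obtain ⟨b, hb⟩ :=
    AdjoinRoot.exists_basis_mk_of_monic hq hqN _ (fun i => (hp i).1) (fun i => (hp i).2)
  have hroot : aeval (AdjoinRoot.root (Tc R N - C c)) (Tc R N) = algebraMap R _ c := by
    rw [AdjoinRoot.aeval_eq, AdjoinRoot.algebraMap_eq, ← AdjoinRoot.mk_C, ← sub_eq_zero,
      ← map_sub, AdjoinRoot.mk_self]
  rw [← AdjoinRoot.aeval_eq]
  exact Tc.trace_mulLeft_aeval (fun j => by rw [hb, AdjoinRoot.aeval_eq]) hroot hk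

/-- For `A = R[x]/(T_N(x) - c)` with `2` invertible in `R` and `N ≥ 3` odd, `A` is free of
rank `N` with basis `1, x, …, x^(N-1)`, and the trace of multiplication by `T_k(x)` for
`0 ≤ k < N` is `0` unless `k = 0`, in which case it is `2N`. -/
theorem annulus_trace (R : Type*) [CommRing R] (h2 : IsUnit (2 : R))
    (N : ℕ) (hN : 3 ≤ N) (hodd : Odd N) (c : R) :
    (∃ b : Module.Basis (Fin N) R (AdjoinRoot (Tc R N - Polynomial.C c)),
      ∀ i : Fin N, b i = AdjoinRoot.root (Tc R N - Polynomial.C c) ^ (i : ℕ)) ∧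
    (∀ k : ℕ, k < N →
      LinearMap.trace R (AdjoinRoot (Tc R N - Polynomial.C c))
          (LinearMap.mulLeft R (AdjoinRoot.mk (Tc R N - Polynomial.C c) (Tc R k))) =
        if k = 0 then (2 * N : R) else 0) :=
  annulus_trace_general R N hN c
end

section
/- Let D be an integral domain, ζ ∈ D a unit, and suppose an algebra G over D has a D-basis {[f]} indexed by elements f of a cancellative commutative monoid M, with multiplication [f]·[g] = ζ^{e(f,g)}[f+g] for some function e : M×M → ℤ. Then G has no zero divisors among elements supported on subsets {f_i} such that f_i + f_j = f_k + f_l implies {i,j} = {k,l}. -/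
open scoped Classical

/-- In the graded algebra with `D`-basis indexed by a cancellative commutative monoid `M` and
twisted multiplication `[f] * [g] = ζ^(e f g) [f + g]`, there are no zero divisors among
elements supported on a family `f i` with the property that `f i + f j = f k + f l` implies
`{i, j} = {k, l}`:  if all the coefficients of the product `(Σ α i [f i]) * (Σ β i [f i])`
vanish, then all `α i = 0` or all `β i = 0`. -/
theorem no_zero_divisors_twisted (D : Type*) [CommRing D] [IsDomain D] (ζ : Dˣ)
    (M : Type*) [AddCancelCommMonoid M] (e : M → M → ℤ)
    (n : ℕ) (f : Fin n → M)
    (hf : ∀ i j k l : Fin n, f i + f j = f k + f l → ({i, j} : Finset (Fin n)) = {k, l})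
    (α β : Fin n → D)
    (hzero : ∀ m : M,
      (∑ q : Fin n × Fin n, if f q.1 + f q.2 = m then
        ((ζ ^ (e (f q.1) (f q.2)) : Dˣ) : D) * α q.1 * β q.2 else 0) = 0) :
    (∀ i, α i = 0) ∨ (∀ i, β i = 0) := by
  -- diagonal: α i * β i = 0 for all i
  have hdiag : ∀ i : Fin n, α i * β i = 0 := by
    intro i
    have h := hzero (f i + f i)
    rw [Finset.sum_eq_single_of_mem (i, i) (Finset.mem_univ _)] at h
    · simp only [if_pos rfl] at h
      rw [mul_assoc] at h
      rcases mul_eq_zero.mp h with h' | h'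
      · exact absurd h' (Units.ne_zero _)
      · exact h'
    · rintro ⟨k, l⟩ - hne
      rw [if_neg]
      intro hkl
      have := hf k l i i hkl
      have hii : ({i, i} : Finset (Fin n)) = {i} := by simp
      rw [hii] at this
      have hk : k ∈ ({k, l} : Finset (Fin n)) := by simp
      have hl : l ∈ ({k, l} : Finset (Fin n)) := by simp
      rw [this, Finset.mem_singleton] at hk hl
      exact hne (by simp [hk, hl])
  by_contra hcon
  push_neg at hcon
  obtain ⟨⟨i, hi⟩, ⟨j, hj⟩⟩ := hcon
  have hij : i ≠ j := by
    rintro rfl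
    rcases mul_eq_zero.mp (hdiag i) with h | h
    exacts [hi h, hj h]
  have hαj : α j = 0 := by
    rcases mul_eq_zero.mp (hdiag j) with h | h
    exacts [h, absurd h hj]
  have h := hzero (f i + f j)
  rw [← Finset.sum_subset (Finset.subset_univ ({(i, j), (j, i)} : Finset (Fin n × Fin n)))] at h
  · rw [Finset.sum_pair (by simp [hij, Ne.symm hij])] at h
    simp only [if_pos rfl, if_pos (add_comm (f j) (f i)), hαj, mul_zero, zero_mul,
      add_zero] at h
    rw [mul_assoc] at h
    rcases mul_eq_zero.mp h with h' | h'
    · exact Units.ne_zero _ h'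
    · rcases mul_eq_zero.mp h' with h'' | h''
      exacts [hi h'', hj h'']
  · rintro ⟨k, l⟩ - hq
    rw [if_neg]
    intro hkl
    have heq := hf k l i j hkl
    have hk : k ∈ ({i, j} : Finset (Fin n)) := by
      rw [← heq]; simp
    have hl : l ∈ ({i, j} : Finset (Fin n)) := by
      rw [← heq]; simp
    simp only [Finset.mem_insert, Finset.mem_singleton] at hk hl
    apply hq
    simp only [Finset.mem_insert, Finset.mem_singleton, Prod.mk.injEq]
    rcases hk with hk | hk <;> rcases hl with hl | hl
    · exfalso
      have hm : j ∈ ({k, l} : Finset (Fin n)) := by rw [heq]; simp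
      simp only [Finset.mem_insert, Finset.mem_singleton, hk, hl] at hm
      rcases hm with hm | hm <;> exact hij hm.symm
    · exact Or.inl ⟨hk, hl⟩
    · exact Or.inr ⟨hk, hl⟩
    · exfalso
      have hm : i ∈ ({k, l} : Finset (Fin n)) := by rw [heq]; simp
      simp only [Finset.mem_insert, Finset.mem_singleton, hk, hl] at hm
      rcases hm with hm | hm <;> exact hij hm
end
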